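/- Purity bounds the largest eigenvalue of the quantum kernel integral operator: if k(x,y) = tr(ρ(x)ρ(y)) is a quantum kernel with pure-state embedding (so k(x,x)=1 for all x) and ρ_μ = ∫ρ(y)dμ(y) is the mean density matrix, then the largest eigenvalue γ_max of the integral operator K satisfies γ_max ≤ √(tr(ρ_μ²)). -/

import Mathlib

/-! With `M = ∫ f(y) ρ(y) dμ(y)` the eigenvalue equation reads `tr(ρ(x) M) = γ f(x)`, so
integrating against `f` gives `tr(M²) = γ ‖f‖²`. For a rank-one projection `P`, Cauchy–Schwarz
for the Hilbert–Schmidt inner product gives `tr(P M)² ≤ tr(P M²)`; integrating this over `x`,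
`γ² ‖f‖² ≤ tr(ρ_μ M²) ≤ ‖ρ_μ‖₂ ‖M‖₂² = √(tr ρ_μ²) · γ ‖f‖²`, and `‖f‖² > 0`. -/

open MeasureTheory Matrix ComplexOrder

attribute [local instance] Matrix.frobeniusNormedAddCommGroup

namespace Matrix

theorem trace_mul_eq_sum_sum {m n R : Type*} [Fintype m] [Fintype n] [AddCommMonoid R] [Mul R]
    (A : Matrix n m R) (B : Matrix m n R) :
    (A * B).trace = ∑ i, ∑ j, A i j * B j i := by
  simp only [trace, diag_apply, mul_apply]

section Frobenius

variable {m n 𝕜 : Type*} [Fintype m] [Fintype n] [RCLike 𝕜]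

theorem frobenius_norm_eq_norm_toLp_vec (A : Matrix m n 𝕜) :
    ‖A‖ = ‖WithLp.toLp 2 (vec A)‖ := by
  rw [frobenius_norm_def, EuclideanSpace.norm_eq, Real.sqrt_eq_rpow, Fintype.sum_prod_type,
    Finset.sum_comm]
  simp [vec]

theorem trace_conjTranspose_mul_eq_inner (A B : Matrix m n 𝕜) :
    (Aᴴ * B).trace = inner 𝕜 (WithLp.toLp 2 (vec A)) (WithLp.toLp 2 (vec B)) := by
  rw [EuclideanSpace.inner_toLp_toLp, dotProduct_comm, star_vec_dotProduct_vec]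

theorem norm_trace_conjTranspose_mul_le (A B : Matrix m n 𝕜) :
    ‖(Aᴴ * B).trace‖ ≤ ‖A‖ * ‖B‖ := by
  rw [trace_conjTranspose_mul_eq_inner, frobenius_norm_eq_norm_toLp_vec A,
    frobenius_norm_eq_norm_toLp_vec B]
  exact norm_inner_le_norm _ _

theorem trace_conjTranspose_mul_self (A : Matrix m n 𝕜) :
    (Aᴴ * A).trace = (‖A‖ : 𝕜) ^ 2 := by
  rw [trace_conjTranspose_mul_eq_inner, inner_self_eq_norm_sq_to_K,
    frobenius_norm_eq_norm_toLp_vec]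

theorem norm_apply_le_frobenius_norm (A : Matrix m n 𝕜) (i : m) (j : n) : ‖A i j‖ ≤ ‖A‖ :=
  calc ‖A i j‖ ≤ ‖WithLp.toLp 2 fun j => A i j‖ :=
        PiLp.norm_apply_le (WithLp.toLp 2 fun j => A i j) j
    _ ≤ ‖A‖ := PiLp.norm_apply_le (WithLp.toLp 2 fun i => WithLp.toLp 2 fun j => A i j) i

theorem IsHermitian.re_trace_mul_self {A : Matrix n n 𝕜} (hA : A.IsHermitian) :
    RCLike.re (A * A).trace = ‖A‖ ^ 2 := by
  nth_rw 1 [← hA.eq]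
  rw [trace_conjTranspose_mul_self, ← RCLike.ofReal_pow, RCLike.ofReal_re]

theorem IsHermitian.frobenius_norm_eq_sqrt {A : Matrix n n 𝕜} (hA : A.IsHermitian) :
    ‖A‖ = √(RCLike.re (A * A).trace) := by
  rw [hA.re_trace_mul_self, Real.sqrt_sq (norm_nonneg A)]

theorem IsHermitian.sq_frobenius_norm_of_idempotent {P : Matrix n n 𝕜} (hP : P.IsHermitian)
    (hPP : P * P = P) : ‖P‖ ^ 2 = RCLike.re P.trace := by
  rw [← hP.re_trace_mul_self, hPP]

theorem sq_re_trace_mul_le_of_idempotent {P M : Matrix n n 𝕜} (hP : P.IsHermitian)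
    (hPP : P * P = P) (hM : M.IsHermitian) :
    RCLike.re (P * M).trace ^ 2 ≤ RCLike.re P.trace * RCLike.re (P * (M * M)).trace := by
  have hPM : (P * M).trace = (Pᴴ * (P * M)).trace := by rw [hP.eq, ← Matrix.mul_assoc, hPP]
  have hPM_sq : ‖P * M‖ ^ 2 = RCLike.re (P * (M * M)).trace := by
    rw [← RCLike.ofReal_re (K := 𝕜) (‖P * M‖ ^ 2), RCLike.ofReal_pow,
      ← trace_conjTranspose_mul_self, conjTranspose_mul, hP.eq, hM.eq, Matrix.mul_assoc, ← Matrix.mul_assoc P, hPP,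
      ← Matrix.mul_assoc, trace_mul_comm, ← Matrix.mul_assoc, trace_mul_comm]
  calc RCLike.re (P * M).trace ^ 2 ≤ ‖(P * M).trace‖ ^ 2 := by
        rw [← sq_abs]; gcongr; exact RCLike.abs_re_le_norm _
    _ ≤ (‖P‖ * ‖P * M‖) ^ 2 := by
        rw [hPM]; gcongr; exact norm_trace_conjTranspose_mul_le P (P * M)
    _ = RCLike.re P.trace * RCLike.re (P * (M * M)).trace := by
        rw [mul_pow, hP.sq_frobenius_norm_of_idempotent hPP, hPM_sq]

theorem IsHermitian.frobenius_norm_eq_one_of_idempotent {P : Matrix n n 𝕜} (hP : P.IsHermitian)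
    (hPP : P * P = P) (htr : P.trace = 1) : ‖P‖ = 1 := by
  rw [← pow_eq_one_iff_of_nonneg (norm_nonneg P) two_ne_zero,
    hP.sq_frobenius_norm_of_idempotent hPP, htr, RCLike.one_re]

theorem IsHermitian.re_trace_mul_mul_self_le {A B : Matrix n n 𝕜} (hA : A.IsHermitian)
    (hB : B.IsHermitian) : RCLike.re (A * (B * B)).trace ≤ ‖A‖ * RCLike.re (B * B).trace :=
  calc RCLike.re (A * (B * B)).trace ≤ ‖(Aᴴ * (B * B)).trace‖ := by
        rw [hA.eq]; exact RCLike.re_le_norm _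
    _ ≤ ‖A‖ * ‖B * B‖ := norm_trace_conjTranspose_mul_le _ _
    _ ≤ ‖A‖ * (‖B‖ * ‖B‖) := by gcongr; exact frobenius_norm_mul B B
    _ = ‖A‖ * RCLike.re (B * B).trace := by rw [hB.re_trace_mul_self, sq]

end Frobenius

section EntrywiseIntegral

variable {X : Type*} [MeasurableSpace X] {μ : Measure X} {m n 𝕜 : Type*} [RCLike 𝕜]

noncomputable def entrywiseIntegral (μ : Measure X) (G : X → Matrix m n 𝕜) : Matrix m n 𝕜 :=
  of fun i j => ∫ y, G y i j ∂μ

theorem isHermitian_entrywiseIntegral {G : X → Matrix n n 𝕜} (hG : ∀ y, (G y).IsHermitian) :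
    (entrywiseIntegral μ G).IsHermitian := by
  ext i j
  simp only [conjTranspose_apply, entrywiseIntegral, of_apply, RCLike.star_def, ← integral_conj]
  exact integral_congr_ae (Filter.Eventually.of_forall fun y => (hG y).apply i j)

variable [Fintype m] [Fintype n] {G : X → Matrix m n 𝕜}

theorem integrable_trace_mul (hG : ∀ i j, Integrable (fun y => G y i j) μ)
    (A : Matrix n m 𝕜) : Integrable (fun y => (A * G y).trace) μ := by
  simp only [trace_mul_eq_sum_sum]
  exact integrable_finsetSum _ fun i _ => integrable_finsetSum _ fun j _ => (hG j i).const_mul _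

theorem trace_mul_entrywiseIntegral (hG : ∀ i j, Integrable (fun y => G y i j) μ)
    (A : Matrix n m 𝕜) : (A * entrywiseIntegral μ G).trace = ∫ y, (A * G y).trace ∂μ := by
  have hAG : ∀ i j, Integrable (fun y => A i j * G y j i) μ := fun i j => (hG j i).const_mul _
  simp only [trace_mul_eq_sum_sum, entrywiseIntegral, of_apply, ← integral_const_mul]
  rw [integral_finsetSum]
  · exact Finset.sum_congr rfl fun i _ => (integral_finsetSum _ fun j _ => hAG i j).symm
  · exact fun i _ => integrable_finsetSum _ fun j _ => hAG i j

theorem re_trace_mul_entrywiseIntegral (hG : ∀ i j, Integrable (fun y => G y i j) μ)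
    (A : Matrix n m 𝕜) :
    RCLike.re (A * entrywiseIntegral μ G).trace = ∫ y, RCLike.re (A * G y).trace ∂μ := by
  rw [trace_mul_entrywiseIntegral hG, integral_re (integrable_trace_mul hG A)]

theorem integrable_smul_apply {g : X → 𝕜} {C : ℝ} (hg : Integrable g μ)
    (hG : ∀ i j, AEStronglyMeasurable (fun y => G y i j) μ) (hGC : ∀ y, ‖G y‖ ≤ C) (i : m)
    (j : n) : Integrable (fun y => (g y • G y) i j) μ :=
  hg.mul_bdd (hG i j) (ae_of_all _ fun y => (norm_apply_le_frobenius_norm _ i j).trans (hGC y))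

theorem re_trace_mul_entrywiseIntegral_ofReal_smul {f : X → ℝ}
    (hG : ∀ i j, Integrable (fun y => ((f y : 𝕜) • G y) i j) μ) (A : Matrix n m 𝕜) :
    RCLike.re (A * entrywiseIntegral μ fun y => (f y : 𝕜) • G y).trace
      = ∫ y, RCLike.re (A * G y).trace * f y ∂μ := by
  simp only [re_trace_mul_entrywiseIntegral hG, Matrix.mul_smul, trace_smul, smul_eq_mul,
    RCLike.re_ofReal_mul, mul_comm (f _)]

end EntrywiseIntegral

end Matrix

theorem integral_sq_pos_of_not_ae_eq_zero {X : Type*} [MeasurableSpace X] {μ : Measure X}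
    {f : X → ℝ} (hf : MemLp f 2 μ) (hf0 : ¬ ∀ᵐ x ∂μ, f x = 0) : 0 < ∫ x, f x ^ 2 ∂μ := by
  refine (integral_nonneg fun x => sq_nonneg (f x)).lt_of_ne fun h => hf0 ?_
  filter_upwards [(integral_eq_zero_iff_of_nonneg (fun x => sq_nonneg (f x))
    hf.integrable_sq).mp h.symm] with x hx
  exact pow_eq_zero_iff two_ne_zero |>.mp hx

theorem le_of_sq_mul_le_mul_mul {γ c T : ℝ} (hc : 0 ≤ c) (hT : 0 < T)
    (h : γ ^ 2 * T ≤ c * (γ * T)) : γ ≤ c := by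
  by_contra! hγ
  have hγpos : 0 < γ := hc.trans_lt hγ
  nlinarith [mul_pos (mul_pos (sub_pos.2 hγ) hγpos) hT]

theorem stmt3_general {X : Type*} [MeasurableSpace X] (μ : Measure X) [IsProbabilityMeasure μ]
    {N : ℕ} (ρ : X → Matrix (Fin N) (Fin N) ℂ)
    (hmeas : ∀ i j, Measurable fun x => ρ x i j)
    (hherm : ∀ x, (ρ x).IsHermitian)
    (htr : ∀ x, (ρ x).trace = 1) (hpure : ∀ x, ρ x * ρ x = ρ x)
    (ρμ : Matrix (Fin N) (Fin N) ℂ)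
    (hρμ : ∀ i j, ρμ i j = ∫ y, ρ y i j ∂μ)
    (γ : ℝ) (f : X → ℝ) (hf : MemLp f 2 μ)
    (hf0 : ¬ (∀ᵐ x ∂μ, f x = 0))
    (heig : ∀ x, ∫ y, (Matrix.trace (ρ x * ρ y)).re * f y ∂μ = γ * f x) :
    γ ≤ Real.sqrt (Matrix.trace (ρμ * ρμ)).re := by
  have hnorm : ∀ x, ‖ρ x‖ ≤ 1 := fun x =>
    ((hherm x).frobenius_norm_eq_one_of_idempotent (hpure x) (htr x)).le
  have hmeas' : ∀ i j, AEStronglyMeasurable (fun y => ρ y i j) μ := fun i j =>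
    (hmeas i j).aestronglyMeasurable
  have hρint : ∀ i j, Integrable (fun y => ρ y i j) μ := by
    simpa using integrable_smul_apply (integrable_const (1 : ℂ)) hmeas' hnorm
  have hfρint := integrable_smul_apply (hf.integrable one_le_two).ofReal hmeas' hnorm
  set M := entrywiseIntegral μ fun y => (f y : ℂ) • ρ y
  have hM : M.IsHermitian :=
    isHermitian_entrywiseIntegral fun y => (hherm y).smul (Complex.conj_ofReal _)
  have hKf : ∀ x, (ρ x * M).trace.re = γ * f x := fun x =>
    (re_trace_mul_entrywiseIntegral_ofReal_smul hfρint (ρ x)).trans (heig x)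
  have hMM : (M * M).trace.re = γ * ∫ x, f x ^ 2 ∂μ := by
    have h := re_trace_mul_entrywiseIntegral_ofReal_smul hfρint M
    simp only [RCLike.re_to_complex, trace_mul_comm M, hKf, mul_assoc, ← sq,
      integral_const_mul] at h
    exact h
  have hρμ' : ρμ = entrywiseIntegral μ ρ := Matrix.ext hρμ
  have hρμherm : ρμ.IsHermitian := hρμ' ▸ isHermitian_entrywiseIntegral hherm
  have hlower : γ ^ 2 * ∫ x, f x ^ 2 ∂μ ≤ (ρμ * (M * M)).trace.re := by
    have h := re_trace_mul_entrywiseIntegral hρint (M * M)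
    simp only [RCLike.re_to_complex] at h
    rw [trace_mul_comm, hρμ', h, ← integral_const_mul]
    refine integral_mono (hf.integrable_sq.const_mul _) (integrable_trace_mul hρint _).re
      fun x => ?_
    simpa [htr x, trace_mul_comm _ (ρ x), hKf, mul_pow] using
      sq_re_trace_mul_le_of_idempotent (hherm x) (hpure x) hM
  have hupper := hρμherm.re_trace_mul_mul_self_le hM
  simp only [RCLike.re_to_complex, hρμherm.frobenius_norm_eq_sqrt, hMM] at hupper
  exact le_of_sq_mul_le_mul_mul (Real.sqrt_nonneg _) (integral_sq_pos_of_not_ae_eq_zero hf hf0)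
    (hlower.trans hupper)

/-- Purity bounds the largest eigenvalue of the quantum kernel integral operator:
for a pure-state embedding `ρ`, any `L²` eigenvalue `γ` of the integral operator of
`k(x,y) = tr(ρ(x)ρ(y))` satisfies `γ ≤ √(tr(ρ_μ²))`, where `ρ_μ = ∫ ρ dμ`. -/
theorem stmt3 {X : Type*} [MeasurableSpace X] (μ : Measure X) [IsProbabilityMeasure μ]
    {N : ℕ} (ρ : X → Matrix (Fin N) (Fin N) ℂ)
    (hmeas : ∀ i j, Measurable fun x => ρ x i j)
    (hherm : ∀ x, (ρ x).IsHermitian) (hpsd : ∀ x, (ρ x).PosSemidef)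
    (htr : ∀ x, (ρ x).trace = 1) (hpure : ∀ x, ρ x * ρ x = ρ x)
    (ρμ : Matrix (Fin N) (Fin N) ℂ)
    (hρμ : ∀ i j, ρμ i j = ∫ y, ρ y i j ∂μ)
    (γ : ℝ) (f : X → ℝ) (hf : MemLp f 2 μ)
    (hf0 : ¬ (∀ᵐ x ∂μ, f x = 0))
    (heig : ∀ x, ∫ y, (Matrix.trace (ρ x * ρ y)).re * f y ∂μ = γ * f x) :
    γ ≤ Real.sqrt (Matrix.trace (ρμ * ρμ)).re :=
  stmt3_general μ ρ hmeas hherm htr hpure ρμ hρμ γ f hf hf0 heig
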